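/- arXiv:2106.12355 — 2 statements merged into one kernel-verified Lean document; each statement's English description precedes it below -/
import Mathlib

section
/- Let R be a commutative ring of characteristic 2 and let A₁, A₂, B₁, B₂, C₁, C₂, D₁, D₂ be k×k circulant matrices over R. Let Ω be the 4k×4k block matrix (A₁, B₁, C₁, D₁; B₁ᵀ, A₁ᵀ, D₁ᵀ, C₁ᵀ; C₂, D₂, A₂, B₂; D₂ᵀ, C₂ᵀ, B₂ᵀ, A₂ᵀ). Then Ω·Ωᵀ = I_{4k} if and only if: A₁A₁ᵀ + B₁B₁ᵀ + C₁C₁ᵀ + D₁D₁ᵀ = I_k, A₂A₂ᵀ + B₂B₂ᵀ + C₂C₂ᵀ + D₂D₂ᵀ = I_k, A₁C₂ᵀ + B₁D₂ᵀ + C₁A₂ᵀ + D₁B₂ᵀ = 0, and A₁D₂ + B₁C₂ + C₁B₂ + D₁A₂ = 0. -/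
open Matrix

/-- The cyclic right-shift permutation matrix `P = (0, I_{n-1}; 1, 0)`. -/
def shiftP (n : ℕ) [NeZero n] (R : Type*) [CommRing R] : Matrix (Fin n) (Fin n) R :=
  Matrix.of fun i j => if j = i + 1 then (1 : R) else 0

/-- The circulant matrix `cir (b₀, …, b_{n-1})`, whose `(i, j)` entry is `b_{(j-i) mod n}`. -/
def cir {R : Type*} [CommRing R] {n : ℕ} (b : Fin n → R) : Matrix (Fin n) (Fin n) R :=
  Matrix.of fun i j => b (j - i)

/-! `Ω` is a `2 × 2` block matrix whose blocks all have the shape `(X Y; Yᵀ Xᵀ)`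
with `X, Y` circulant. Because circulant matrices commute and are closed under transposition,
such blocks are closed under products, `(X Y; Yᵀ Xᵀ)(U V; Vᵀ Uᵀ) = (XU + YVᵀ, XV + YUᵀ; ⋯)`,
so each block of `Ω Ωᵀ` is determined by its top row. On the diagonal that row is
`(XXᵀ + YYᵀ, XY + YX)`, and `XY + YX = 2XY = 0` in characteristic 2. -/

section PairBlock

variable {n α : Type*}

def pairBlock (X Y : Matrix n n α) : Matrix (n ⊕ n) (n ⊕ n) α :=
  fromBlocks X Y Yᵀ Xᵀ

theorem fromBlocks_eq_pairBlock (X Y : Matrix n n α) : fromBlocks X Y Yᵀ Xᵀ = pairBlock X Y :=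
  rfl

theorem pairBlock_transpose (X Y : Matrix n n α) : (pairBlock X Y)ᵀ = pairBlock Xᵀ Y := by
  simp only [pairBlock, fromBlocks_transpose, transpose_transpose]

theorem pairBlock_add [Add α] (X Y U V : Matrix n n α) :
    pairBlock X Y + pairBlock U V = pairBlock (X + U) (Y + V) := by
  simp only [pairBlock, fromBlocks_add, transpose_add]

theorem pairBlock_eq_zero_iff [Zero α] {X Y : Matrix n n α} :
    pairBlock X Y = 0 ↔ X = 0 ∧ Y = 0 := by
  rw [pairBlock, ← fromBlocks_zero, fromBlocks_inj]
  constructor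
  · rintro ⟨hX, hY, -, -⟩
    exact ⟨hX, hY⟩
  · rintro ⟨rfl, rfl⟩
    simp only [transpose_zero, and_self]

theorem pairBlock_eq_one_iff [DecidableEq n] [Zero α] [One α] {X Y : Matrix n n α} :
    pairBlock X Y = 1 ↔ X = 1 ∧ Y = 0 := by
  rw [pairBlock, ← fromBlocks_one, fromBlocks_inj]
  constructor
  · rintro ⟨hX, hY, -, -⟩
    exact ⟨hX, hY⟩
  · rintro ⟨rfl, rfl⟩
    simp only [transpose_zero, transpose_one, and_self]

theorem pairBlock_mul_pairBlock [Fintype n] [CommSemiring α] {X Y U V : Matrix n n α}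
    (hXU : Commute Xᵀ Uᵀ) (hXV : Commute Xᵀ Vᵀ) (hYU : Commute Yᵀ U) (hYV : Commute Yᵀ V) :
    pairBlock X Y * pairBlock U V = pairBlock (X * U + Y * Vᵀ) (X * V + Y * Uᵀ) := by
  rw [pairBlock, pairBlock, fromBlocks_multiply, pairBlock]
  congr 1
  · rw [transpose_add, transpose_mul, transpose_mul, transpose_transpose, hYU.eq, hXV.eq,
      add_comm]
  · rw [transpose_add, transpose_mul, transpose_mul, transpose_transpose, hYV.eq, hXU.eq,
      add_comm]

end PairBlock

theorem fromBlocks_mul_transpose_eq_one_iff {m n α : Type*} [Fintype m] [Fintype n]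
    [DecidableEq m] [DecidableEq n] [CommSemiring α] {A : Matrix m m α} {B : Matrix m n α}
    {C : Matrix n m α} {D : Matrix n n α} :
    fromBlocks A B C D * (fromBlocks A B C D)ᵀ = 1 ↔
      A * Aᵀ + B * Bᵀ = 1 ∧ C * Cᵀ + D * Dᵀ = 1 ∧ A * Cᵀ + B * Dᵀ = 0 := by
  have hCA : C * Aᵀ + D * Bᵀ = (A * Cᵀ + B * Dᵀ)ᵀ := by
    rw [transpose_add, transpose_mul, transpose_mul, transpose_transpose, transpose_transpose]
  rw [fromBlocks_transpose, fromBlocks_multiply, ← fromBlocks_one, fromBlocks_inj, hCA]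
  constructor
  · rintro ⟨h₁, h₀, -, h₂⟩
    exact ⟨h₁, h₂, h₀⟩
  · rintro ⟨h₁, h₂, h₀⟩
    exact ⟨h₁, h₀, by rw [h₀, transpose_zero], h₂⟩

section Circulant

variable {R : Type*} [CommRing R] {k : ℕ}

def IsCirculant (A : Matrix (Fin k) (Fin k) R) : Prop :=
  ∃ a, A = cir a

theorem cir_eq_circulant (b : Fin k → R) : cir b = circulant fun i => b (-i) := by
  ext i j
  have : NeZero k := ⟨i.pos.ne'⟩
  simp only [cir, of_apply, circulant_apply, neg_sub]

theorem isCirculant_iff {A : Matrix (Fin k) (Fin k) R} :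
    IsCirculant A ↔ ∃ v, A = circulant v := by
  refine ⟨fun ⟨b, hb⟩ => ⟨_, hb.trans (cir_eq_circulant b)⟩, fun ⟨v, hv⟩ => ⟨fun i => v (-i), ?_⟩⟩
  simp only [hv, cir_eq_circulant, neg_neg]

theorem IsCirculant.transpose {A : Matrix (Fin k) (Fin k) R} (hA : IsCirculant A) :
    IsCirculant Aᵀ := by
  obtain ⟨v, rfl⟩ := isCirculant_iff.mp hA
  exact isCirculant_iff.mpr ⟨_, Fin.transpose_circulant v⟩

theorem IsCirculant.commute {A B : Matrix (Fin k) (Fin k) R} (hA : IsCirculant A)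
    (hB : IsCirculant B) : Commute A B := by
  obtain ⟨v, rfl⟩ := isCirculant_iff.mp hA
  obtain ⟨w, rfl⟩ := isCirculant_iff.mp hB
  exact Fin.circulant_mul_comm v w

variable {X Y U V : Matrix (Fin k) (Fin k) R}

theorem pairBlock_mul_pairBlock_of_isCirculant (hX : IsCirculant X) (hY : IsCirculant Y)
    (hU : IsCirculant U) (hV : IsCirculant V) :
    pairBlock X Y * pairBlock U V = pairBlock (X * U + Y * Vᵀ) (X * V + Y * Uᵀ) :=
  pairBlock_mul_pairBlock (hX.transpose.commute hU.transpose) (hX.transpose.commute hV.transpose)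
    (hY.transpose.commute hU) (hY.transpose.commute hV)

theorem pairBlock_mul_transpose_self [CharP R 2] (hX : IsCirculant X) (hY : IsCirculant Y) :
    pairBlock X Y * (pairBlock X Y)ᵀ = pairBlock (X * Xᵀ + Y * Yᵀ) 0 := by
  rw [pairBlock_transpose, pairBlock_mul_pairBlock_of_isCirculant hX hY hX.transpose hY,
    transpose_transpose, (hY.commute hX).eq, ← two_smul R, CharTwo.two_eq_zero, zero_smul]

end Circulant

/-- Theorem 3.1 (length 40 construction): for `k×k` circulant matrices
`A₁, B₁, C₁, D₁, A₂, B₂, C₂, D₂` over a commutative ring of characteristic 2, the block matrix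
`Ω = (A₁ B₁ C₁ D₁; B₁ᵀ A₁ᵀ D₁ᵀ C₁ᵀ; C₂ D₂ A₂ B₂; D₂ᵀ C₂ᵀ B₂ᵀ A₂ᵀ)` satisfies `Ω Ωᵀ = I`
iff the four stated conditions hold. -/
theorem omega_two_level_selfdual_iff {R : Type*} [CommRing R] [CharP R 2] {k : ℕ}
    (A₁ A₂ B₁ B₂ C₁ C₂ D₁ D₂ : Matrix (Fin k) (Fin k) R)
    (hA₁ : ∃ a, A₁ = cir a) (hA₂ : ∃ a, A₂ = cir a) (hB₁ : ∃ b, B₁ = cir b)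
    (hB₂ : ∃ b, B₂ = cir b) (hC₁ : ∃ c, C₁ = cir c) (hC₂ : ∃ c, C₂ = cir c)
    (hD₁ : ∃ d, D₁ = cir d) (hD₂ : ∃ d, D₂ = cir d) :
    (Matrix.fromBlocks
        (Matrix.fromBlocks A₁ B₁ B₁ᵀ A₁ᵀ) (Matrix.fromBlocks C₁ D₁ D₁ᵀ C₁ᵀ)
        (Matrix.fromBlocks C₂ D₂ D₂ᵀ C₂ᵀ) (Matrix.fromBlocks A₂ B₂ B₂ᵀ A₂ᵀ)) *
      (Matrix.fromBlocks
        (Matrix.fromBlocks A₁ B₁ B₁ᵀ A₁ᵀ) (Matrix.fromBlocks C₁ D₁ D₁ᵀ C₁ᵀ)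
        (Matrix.fromBlocks C₂ D₂ D₂ᵀ C₂ᵀ) (Matrix.fromBlocks A₂ B₂ B₂ᵀ A₂ᵀ))ᵀ = 1 ↔
    (A₁ * A₁ᵀ + B₁ * B₁ᵀ + C₁ * C₁ᵀ + D₁ * D₁ᵀ = 1 ∧
     A₂ * A₂ᵀ + B₂ * B₂ᵀ + C₂ * C₂ᵀ + D₂ * D₂ᵀ = 1 ∧
     A₁ * C₂ᵀ + B₁ * D₂ᵀ + C₁ * A₂ᵀ + D₁ * B₂ᵀ = 0 ∧
     A₁ * D₂ + B₁ * C₂ + C₁ * B₂ + D₁ * A₂ = 0) := by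
  simp only [fromBlocks_eq_pairBlock]
  rw [fromBlocks_mul_transpose_eq_one_iff, pairBlock_mul_transpose_self hA₁ hB₁,
    pairBlock_mul_transpose_self hC₁ hD₁, pairBlock_mul_transpose_self hC₂ hD₂,
    pairBlock_mul_transpose_self hA₂ hB₂, add_comm (pairBlock (C₂ * C₂ᵀ + D₂ * D₂ᵀ) 0),
    pairBlock_transpose, pairBlock_transpose,
    pairBlock_mul_pairBlock_of_isCirculant hA₁ hB₁ (IsCirculant.transpose hC₂) hD₂,
    pairBlock_mul_pairBlock_of_isCirculant hC₁ hD₁ (IsCirculant.transpose hA₂) hB₂]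
  simp only [pairBlock_add, add_zero, pairBlock_eq_one_iff, pairBlock_eq_zero_iff,
    transpose_transpose, and_true, ← add_assoc]
end

section
/- The Gray map ψ : F₄ⁿ → F₂^{2n} defined coordinatewise by aω + b(1+ω) ↦ (a, b) is an F₂-linear bijection, and if C is a self-orthogonal linear code over F₄ (with respect to the Euclidean inner product), then ψ(C) is a self-orthogonal binary code. -/
/-!
In the coordinates `aω + b(1+ω) ↦ (a, b)` the functional `(a, b) ↦ a + b` is the absolute trace
`F₄ → F₂`, and `{ω, 1 + ω} = {ω, ω²}` is a trace-orthogonal basis: `Tr(ω·ω) = Tr(ω²·ω²) = 1` and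
`Tr(ω·ω²) = Tr 1 = 0`. Hence `Tr(uv)` is the binary inner product of the coordinate pairs of `u` and
`v`, so `ψ(x)·ψ(y) = Tr ⟨x, y⟩`, which vanishes whenever `⟨x, y⟩ = 0`.
-/

open Finset

section GrayMap

variable {ι A R : Type*} [AddCommMonoid A] [AddCommMonoid R]

def grayMap (e : A ≃+ R × R) : (ι → A) ≃+ (ι ⊕ ι → R) where
  toFun x := Sum.elim (fun i => (e (x i)).1) (fun i => (e (x i)).2)
  invFun y i := e.symm (y (Sum.inl i), y (Sum.inr i))
  left_inv x := by ext i; simp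
  right_inv y := by ext (i | i) <;> simp
  map_add' x y := by ext (i | i) <;> simp

@[simp]
theorem grayMap_apply_inl (e : A ≃+ R × R) (x : ι → A) (i : ι) :
    grayMap e x (Sum.inl i) = (e (x i)).1 := rfl

@[simp]
theorem grayMap_apply_inr (e : A ≃+ R × R) (x : ι → A) (i : ι) :
    grayMap e x (Sum.inr i) = (e (x i)).2 := rfl

theorem sum_grayMap_mul {S : Type*} [Semiring S] [Fintype ι] (e : A ≃+ S × S) (x y : ι → A) :
    ∑ j, grayMap e x j * grayMap e y j =
      ∑ i, ((e (x i)).1 * (e (y i)).1 + (e (x i)).2 * (e (y i)).2) := by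
  rw [Fintype.sum_sum_type, sum_add_distrib]
  rfl

end GrayMap

section F4

variable {F : Type*} [Field F] [CharP F 2] {ω : F}

variable (ω) in
def grayDecode : ZMod 2 × ZMod 2 →+ F where
  toFun p := ZMod.castHom dvd_rfl F p.1 * ω + ZMod.castHom dvd_rfl F p.2 * (1 + ω)
  map_zero' := by simp
  map_add' p q := by simp only [Prod.fst_add, Prod.snd_add, map_add]; ring

theorem grayDecode_apply (p : ZMod 2 × ZMod 2) :
    grayDecode ω p = ZMod.cast p.1 * ω + ZMod.cast p.2 * (1 + ω) := rfl

theorem grayDecode_injective (hω : ω ^ 2 + ω + 1 = 0) :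
    Function.Injective (grayDecode ω) := by
  refine (injective_iff_map_eq_zero _).mpr ?_
  have h2 : (2 : F) = 0 := CharTwo.two_eq_zero
  suffices ∀ a b : ZMod 2, grayDecode ω (a, b) = 0 → (a, b) = 0 from fun p => this p.1 p.2
  intro a b hab
  by_contra hne
  apply one_ne_zero (α := F)
  have cases_two : ∀ z : ZMod 2, z = 0 ∨ z = 1 := by decide
  rcases cases_two a with rfl | rfl <;> rcases cases_two b with rfl | rfl <;>
    simp [grayDecode_apply] at hab hne
  · linear_combination hω - ω * hab
  · linear_combination hω - (ω + 1) * hab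
  · linear_combination hab - ω * h2

theorem grayDecode_bijective [Fintype F] (hcard : Fintype.card F = 4) (hω : ω ^ 2 + ω + 1 = 0) :
    Function.Bijective (grayDecode ω) :=
  (Fintype.bijective_iff_injective_and_card _).mpr ⟨grayDecode_injective hω, by simp [hcard]⟩

theorem grayDecode_mul (hω : ω ^ 2 + ω + 1 = 0) (p q : ZMod 2 × ZMod 2) :
    grayDecode ω p * grayDecode ω q =
      grayDecode ω (p.2 * q.2 + p.1 * q.2 + p.2 * q.1, p.1 * q.1 + p.1 * q.2 + p.2 * q.1) := by
  have h2 : (2 : F) = 0 := CharTwo.two_eq_zero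
  set c := ZMod.castHom (dvd_rfl) F
  simp only [grayDecode, AddMonoidHom.coe_mk, ZeroHom.coe_mk, map_add, map_mul]
  linear_combination (c p.1 * c q.1 + c p.1 * c q.2 + c p.2 * c q.1 + c p.2 * c q.2) * hω -
    (c p.1 * c q.1 + c p.1 * c q.2 + c p.2 * c q.1) * (1 + ω) * h2

variable [Fintype F]

noncomputable def grayEquiv (hcard : Fintype.card F = 4) (hω : ω ^ 2 + ω + 1 = 0) :
    F ≃+ ZMod 2 × ZMod 2 :=
  (AddEquiv.ofBijective _ (grayDecode_bijective hcard hω)).symm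

theorem grayEquiv_grayDecode (hcard : Fintype.card F = 4) (hω : ω ^ 2 + ω + 1 = 0)
    (p : ZMod 2 × ZMod 2) : grayEquiv hcard hω (grayDecode ω p) = p :=
  (AddEquiv.ofBijective _ (grayDecode_bijective hcard hω)).symm_apply_apply p

noncomputable def grayTrace (hcard : Fintype.card F = 4) (hω : ω ^ 2 + ω + 1 = 0) : F →+ ZMod 2 :=
  (AddMonoidHom.fst (ZMod 2) (ZMod 2) + AddMonoidHom.snd (ZMod 2) (ZMod 2)).comp
    (grayEquiv hcard hω).toAddMonoidHom

theorem grayTrace_mul (hcard : Fintype.card F = 4) (hω : ω ^ 2 + ω + 1 = 0) (u v : F) :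
    grayTrace hcard hω (u * v) =
      (grayEquiv hcard hω u).1 * (grayEquiv hcard hω v).1 +
        (grayEquiv hcard hω u).2 * (grayEquiv hcard hω v).2 := by
  obtain ⟨p, rfl⟩ := (grayDecode_bijective hcard hω).surjective u
  obtain ⟨q, rfl⟩ := (grayDecode_bijective hcard hω).surjective v
  simp only [grayTrace, AddMonoidHom.comp_apply, AddMonoidHom.add_apply,
    AddEquiv.coe_toAddMonoidHom, AddMonoidHom.coe_fst, AddMonoidHom.coe_snd, grayDecode_mul hω,
    grayEquiv_grayDecode]
  revert p q
  decide

theorem sum_grayMap_grayEquiv_mul {ι : Type*} [Fintype ι] (hcard : Fintype.card F = 4)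
    (hω : ω ^ 2 + ω + 1 = 0) (x y : ι → F) :
    ∑ j, grayMap (grayEquiv hcard hω) x j * grayMap (grayEquiv hcard hω) y j =
      grayTrace hcard hω (∑ i, x i * y i) := by
  simp only [sum_grayMap_mul, map_sum, grayTrace_mul]

end F4

/-- The Gray map `ψ : F₄ⁿ → F₂^{2n}`, `aω + b(1+ω) ↦ (a, b)`, is an `F₂`-linear bijection
(additive homomorphism between elementary abelian 2-groups, i.e. `F₂`-linear), and it sends
any self-orthogonal linear code over `F₄` (w.r.t. the Euclidean inner product) to a
self-orthogonal binary code.  Here `F₄` is a field with 4 elements and `ω` satisfies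
`ω² + ω + 1 = 0`, so that `{ω, 1+ω}` is an `F₂`-basis of `F₄`. -/
theorem graymap_F4_linear_bijective_selforthogonal
    {F : Type*} [Field F] [Fintype F] (hcard : Fintype.card F = 4) [CharP F 2]
    (ω : F) (hω : ω ^ 2 + ω + 1 = 0) (n : ℕ) :
    ∃ ψ : (Fin n → F) →+ ((Fin n ⊕ Fin n) → ZMod 2),
      Function.Bijective ψ ∧
      (∀ (x : Fin n → F) (a b : Fin n → ZMod 2),
          (∀ i, x i = (ZMod.cast (a i) : F) * ω + (ZMod.cast (b i) : F) * (1 + ω)) →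
          ψ x = Sum.elim a b) ∧
      (∀ C : Submodule F (Fin n → F),
          (∀ x ∈ C, ∀ y ∈ C, ∑ i, x i * y i = 0) →
          ∀ x ∈ C, ∀ y ∈ C, ∑ j, ψ x j * ψ y j = 0) := by
  set ψ := grayMap (ι := Fin n) (grayEquiv hcard hω)
  refine ⟨ψ.toAddMonoidHom, ψ.bijective, ?_, ?_⟩
  · intro x a b hx
    have hx' : x = fun i => grayDecode ω (a i, b i) := funext hx
    ext (i | i) <;> simp [ψ, hx', grayEquiv_grayDecode]
  · intro C hC x hx y hy
    rw [AddEquiv.coe_toAddMonoidHom, sum_grayMap_grayEquiv_mul, hC x hx y hy, map_zero]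
end
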